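/- arXiv:2512.21517 — 4 statements merged into one kernel-verified Lean document; each statement's English description precedes it below -/
import Mathlib

section
/- For all t ∈ [0, π/2], ξ(t) ≤ 0, where ξ(t) = (cos²t + 2t·sin t·cos t + t² − π²/4)/cos²t for t < π/2 and ξ(π/2) = 0. -/
open Real

/- The numerator N(t) = cos²t + 2t sin t cos t + t² has derivative 4t cos²t ≥ 0 on [0, ∞),
so N(t) ≤ N(π/2) = π²/4 on [0, π/2]; dividing by cos²t ≥ 0 keeps the sign. -/

lemma hasDerivAt_cos_sq_add_two_mul_sin_mul_cos_add_sq (x : ℝ) :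
    HasDerivAt (fun t => cos t ^ 2 + 2 * t * sin t * cos t + t ^ 2) (4 * x * cos x ^ 2) x := by
  refine ((((hasDerivAt_cos x).pow 2).add ((((hasDerivAt_id' x).const_mul 2).mul
    (hasDerivAt_sin x)).mul (hasDerivAt_cos x))).add ((hasDerivAt_id' x).pow 2)).congr_deriv ?_
  simp only [Pi.mul_apply]
  linear_combination -2 * x * sin_sq_add_cos_sq x

lemma monotoneOn_cos_sq_add_two_mul_sin_mul_cos_add_sq :
    MonotoneOn (fun t => cos t ^ 2 + 2 * t * sin t * cos t + t ^ 2) (Set.Ici 0) := by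
  have hderiv := hasDerivAt_cos_sq_add_two_mul_sin_mul_cos_add_sq
  apply monotoneOn_of_deriv_nonneg (convex_Ici 0)
  · exact fun x _ => (hderiv x).continuousAt.continuousWithinAt
  · exact fun x _ => (hderiv x).differentiableAt.differentiableWithinAt
  · intro x hx
    rw [interior_Ici] at hx
    rw [(hderiv x).deriv]
    have : 0 ≤ x := hx.le
    positivity

lemma cos_sq_add_two_mul_sin_mul_cos_add_sq_le {t : ℝ} (ht : t ∈ Set.Icc 0 (π / 2)) :
    cos t ^ 2 + 2 * t * sin t * cos t + t ^ 2 ≤ π ^ 2 / 4 := by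
  have h := monotoneOn_cos_sq_add_two_mul_sin_mul_cos_add_sq ht.1
    (Set.mem_Ici.2 (by positivity)) ht.2
  simp only [cos_pi_div_two, sin_pi_div_two] at h
  linarith

theorem stmt4 (ξ : ℝ → ℝ)
    (hξ : ∀ t, t < π/2 →
      ξ t = (Real.cos t ^ 2 + 2 * t * Real.sin t * Real.cos t + t ^ 2 - π ^ 2 / 4) /
        Real.cos t ^ 2)
    (hξ' : ξ (π/2) = 0) :
    ∀ t ∈ Set.Icc (0:ℝ) (π/2), ξ t ≤ 0 := by
  intro t ht
  rcases ht.2.eq_or_lt with rfl | hlt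
  · exact hξ'.le
  · rw [hξ t hlt]
    exact div_nonpos_of_nonpos_of_nonneg
      (by linarith [cos_sq_add_two_mul_sin_mul_cos_add_sq_le ht]) (sq_nonneg _)
end

section
/- For all t ∈ [0, π/2), one has ∫_t^{π/2} s·cos²s ds ≤ (1/2)·cos²t. Consequently ξ(t) ≥ −2 on [0, π/2), where ξ(t) = −4·sec²t·∫_t^{π/2} s·cos²s ds. -/
open Real

lemma aux_mul_cos_le_sin (s : ℝ) (h0 : 0 ≤ s) (h1 : s ≤ π/2) :
    s * Real.cos s ≤ Real.sin s := by
  rcases eq_or_lt_of_le h0 with h | h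
  · simp [← h]
  rcases eq_or_lt_of_le h1 with h' | h'
  · have : Real.cos s = 0 := by rw [h']; simp
    rw [this]
    simpa using Real.sin_nonneg_of_nonneg_of_le_pi h0 (by rw [h']; linarith [Real.pi_pos])
  · have hc : 0 < Real.cos s := Real.cos_pos_of_mem_Ioo ⟨by linarith [Real.pi_pos], h'⟩
    have htan := Real.lt_tan h h'
    rw [Real.tan_eq_sin_div_cos] at htan
    rw [lt_div_iff₀ hc] at htan
    linarith

lemma aux_integral_sin_cos (t : ℝ) :
    (∫ s in t..(π/2), Real.sin s * Real.cos s) = (1/2) * Real.cos t ^ 2 := by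
  have h : ∀ s ∈ Set.uIcc t (π/2), HasDerivAt (fun x => -(Real.cos x)^2/2)
      (Real.sin s * Real.cos s) s := by
    intro s _
    have : HasDerivAt (fun x => -(Real.cos x)^2/2)
        (-(2 * Real.cos s ^ 1 * -Real.sin s)/2) s := by
      exact (((Real.hasDerivAt_cos s).pow 2).neg.div_const 2)
    convert this using 1
    ring
  have := intervalIntegral.integral_eq_sub_of_hasDerivAt h
    (by apply Continuous.intervalIntegrable; continuity)
  rw [this]
  simp [Real.cos_pi_div_two]
  ring

theorem stmt5 (t : ℝ) (ht : t ∈ Set.Ico 0 (π/2)) :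
    (∫ s in t..(π/2), s * Real.cos s ^ 2) ≤ (1/2) * Real.cos t ^ 2 ∧
    -4 * (1 / Real.cos t) ^ 2 * (∫ s in t..(π/2), s * Real.cos s ^ 2) ≥ -2 := by
  obtain ⟨ht0, htπ⟩ := ht
  have hmain : (∫ s in t..(π/2), s * Real.cos s ^ 2) ≤ (1/2) * Real.cos t ^ 2 := by
    rw [← aux_integral_sin_cos t]
    apply intervalIntegral.integral_mono_on (by linarith)
    · apply Continuous.intervalIntegrable; continuity
    · apply Continuous.intervalIntegrable; continuity
    · intro s hs
      obtain ⟨hs1, hs2⟩ := hs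
      have hc : 0 ≤ Real.cos s := Real.cos_nonneg_of_mem_Icc ⟨by linarith, hs2⟩
      have := aux_mul_cos_le_sin s (by linarith) hs2
      calc s * Real.cos s ^ 2 = (s * Real.cos s) * Real.cos s := by ring
        _ ≤ Real.sin s * Real.cos s := by nlinarith
  refine ⟨hmain, ?_⟩
  have hc : 0 < Real.cos t := Real.cos_pos_of_mem_Ioo ⟨by linarith [Real.pi_pos], htπ⟩
  have h2 : (1 / Real.cos t)^2 * Real.cos t ^ 2 = 1 := by
    field_simp
  nlinarith [sq_nonneg (1 / Real.cos t)]
end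

section
/- Let z : [0, π/2] → (0, 1] be measurable with mean μ = (2/π)·∫_0^{π/2} z(t) dt. Then (2/π)·∫_0^{π/2} z(t)^{−1/2} dt ≥ μ^{−1/2} + (3/8)·Var(z), where Var(z) = (2/π)·∫_0^{π/2} (z(t) − μ)² dt. -/
open Real

private lemma key_uv (u b : ℝ) (hu : 0 < u) (hu1 : u ≤ 1) (hb : 0 < b) (hb1 : b ≤ 1) :
    3/(2*b) - u^2/(2*b^3) + (3/8)*(u^2-b^2)^2 ≤ 1/u := by
  have hb3 : b^3 ≤ 1 := pow_le_one₀ hb.le hb1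
  have h1 : u*b^3 ≤ 1 := by nlinarith [pow_pos hb 3]
  have h2 : 3*(u+b)^2 ≤ 4*(u+2*b) := by
    nlinarith [mul_nonneg (sub_nonneg.2 hu1) (sub_nonneg.2 hb1), sq_nonneg (u-b),
      sq_nonneg (1-u), sq_nonneg (1-b)]
  have hP : 3*u*b^3*(u+b)^2 ≤ 4*(u+2*b) := by nlinarith [sq_nonneg (u+b), mul_pos hu hb]
  have hQ : (u-b)^2 * (3*u*b^3*(u+b)^2) ≤ (u-b)^2 * (4*(u+2*b)) :=
    mul_le_mul_of_nonneg_left hP (sq_nonneg _)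
  have hA : 3/(2*b) - u^2/(2*b^3) + (3/8)*(u^2-b^2)^2
      = (12*b^2 - 4*u^2 + 3*b^3*(u^2-b^2)^2)/(8*b^3) := by
    field_simp; ring
  rw [hA, div_le_div_iff₀ (by positivity) hu]
  nlinarith [hQ]

private lemma key_pt (x a : ℝ) (hx0 : 0 < x) (hx1 : x ≤ 1) (ha0 : 0 < a) (ha1 : a ≤ 1) :
    (3/2) * a ^ (-(1/2):ℝ) - (1/2) * a ^ (-(3/2):ℝ) * x + (3/8)*(x-a)^2
      ≤ x ^ (-(1/2):ℝ) := by
  set u := Real.sqrt x with hudef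
  set b := Real.sqrt a with hbdef
  have hu : 0 < u := Real.sqrt_pos.2 hx0
  have hb : 0 < b := Real.sqrt_pos.2 ha0
  have hu1 : u ≤ 1 := by rw [hudef, show (1:ℝ) = Real.sqrt 1 by simp]; exact Real.sqrt_le_sqrt hx1
  have hb1 : b ≤ 1 := by rw [hbdef, show (1:ℝ) = Real.sqrt 1 by simp]; exact Real.sqrt_le_sqrt ha1
  have hx' : x = u^2 := (Real.sq_sqrt hx0.le).symm
  have ha' : a = b^2 := (Real.sq_sqrt ha0.le).symm
  have e1 : x ^ (-(1/2):ℝ) = 1/u := by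
    rw [hx', ← Real.rpow_natCast u 2, ← Real.rpow_mul hu.le,
      show ((2:ℕ):ℝ)*(-(1/2)) = ((-1:ℤ):ℝ) by push_cast; norm_num, Real.rpow_intCast, zpow_neg_one, one_div]
  have e2 : a ^ (-(1/2):ℝ) = 1/b := by
    rw [ha', ← Real.rpow_natCast b 2, ← Real.rpow_mul hb.le,
      show ((2:ℕ):ℝ)*(-(1/2)) = ((-1:ℤ):ℝ) by push_cast; norm_num, Real.rpow_intCast, zpow_neg_one, one_div]
  have e3 : a ^ (-(3/2):ℝ) = 1/b^3 := by
    rw [ha', ← Real.rpow_natCast b 2, ← Real.rpow_mul hb.le,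
      show ((2:ℕ):ℝ)*(-(3/2)) = ((-3:ℤ):ℝ) by push_cast; norm_num, Real.rpow_intCast, zpow_neg, one_div]
    norm_num [zpow_ofNat]
  rw [e1, e2, e3, hx', ha']
  have := key_uv u b hu hu1 hb hb1
  calc (3:ℝ)/2 * (1/b) - 1/2 * (1/b^3) * u^2 + 3/8 * (u^2 - b^2)^2
      = 3/(2*b) - u^2/(2*b^3) + (3/8)*(u^2-b^2)^2 := by ring
    _ ≤ 1/u := this

theorem stmt9 (z : ℝ → ℝ) (μ : ℝ)
    (hz : ∀ t ∈ Set.Icc (0:ℝ) (π/2), z t ∈ Set.Ioc (0:ℝ) 1)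
    (hzi : IntervalIntegrable z MeasureTheory.volume 0 (π/2))
    (hzi' : IntervalIntegrable (fun t => (z t) ^ (-(1/2) : ℝ)) MeasureTheory.volume 0 (π/2))
    (hzi'' : IntervalIntegrable (fun t => (z t - μ) ^ 2) MeasureTheory.volume 0 (π/2))
    (hμ : μ = (2/π) * ∫ t in (0:ℝ)..(π/2), z t) :
    (2/π) * ∫ t in (0:ℝ)..(π/2), (z t) ^ (-(1/2) : ℝ) ≥
      μ ^ (-(1/2) : ℝ) + (3/8) * ((2/π) * ∫ t in (0:ℝ)..(π/2), (z t - μ) ^ 2) := by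
  have hπ : (0:ℝ) < π/2 := by positivity
  have hπ' : (0:ℝ) < 2/π := by positivity
  -- μ bounds
  have hIz_pos : 0 < ∫ t in (0:ℝ)..(π/2), z t := by
    apply intervalIntegral.intervalIntegral_pos_of_pos_on hzi
    · intro t ht
      exact (hz t ⟨ht.1.le, ht.2.le⟩).1
    · exact hπ
  have hIz_le : (∫ t in (0:ℝ)..(π/2), z t) ≤ π/2 := by
    have := intervalIntegral.integral_mono_on hπ.le hzi intervalIntegrable_const
      (fun t ht => (hz t ht).2)
    simpa using this
  have hμ0 : 0 < μ := by rw [hμ]; positivity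
  have hμ1 : μ ≤ 1 := by
    rw [hμ]
    calc (2/π) * ∫ t in (0:ℝ)..(π/2), z t ≤ (2/π) * (π/2) := by
          exact mul_le_mul_of_nonneg_left hIz_le hπ'.le
      _ = 1 := by field_simp
  -- pointwise bound and integration
  set C0 : ℝ := (3/2) * μ ^ (-(1/2):ℝ) with hC0
  set C1 : ℝ := (1/2) * μ ^ (-(3/2):ℝ) with hC1
  have hgi : IntervalIntegrable (fun t => C0 - C1 * z t + (3/8)*(z t - μ)^2)
      MeasureTheory.volume 0 (π/2) :=
    ((intervalIntegrable_const).sub (hzi.const_mul C1)).add (hzi''.const_mul (3/8))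
  have hmono : (∫ t in (0:ℝ)..(π/2), (C0 - C1 * z t + (3/8)*(z t - μ)^2))
      ≤ ∫ t in (0:ℝ)..(π/2), (z t) ^ (-(1/2):ℝ) := by
    apply intervalIntegral.integral_mono_on hπ.le hgi hzi'
    intro t ht
    have hzt := hz t ht
    exact key_pt (z t) μ hzt.1 hzt.2 hμ0 hμ1
  have hsplit : (∫ t in (0:ℝ)..(π/2), (C0 - C1 * z t + (3/8)*(z t - μ)^2))
      = (π/2) * C0 - C1 * (∫ t in (0:ℝ)..(π/2), z t)
        + (3/8) * (∫ t in (0:ℝ)..(π/2), (z t - μ)^2) := by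
    rw [intervalIntegral.integral_add ((intervalIntegrable_const).sub (hzi.const_mul C1))
        (hzi''.const_mul (3/8)),
      intervalIntegral.integral_sub intervalIntegrable_const (hzi.const_mul C1),
      intervalIntegral.integral_const_mul, intervalIntegral.integral_const_mul,
      intervalIntegral.integral_const]
    simp [smul_eq_mul, hC0]
    ring
  have hIz : (∫ t in (0:ℝ)..(π/2), z t) = (π/2) * μ := by
    rw [hμ]; field_simp
  have hrpow : μ ^ (-(3/2):ℝ) * μ = μ ^ (-(1/2):ℝ) := by
    nth_rewrite 2 [← Real.rpow_one μ]
    rw [← Real.rpow_add hμ0]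
    norm_num
  have key : (2/π) * (∫ t in (0:ℝ)..(π/2), (C0 - C1 * z t + (3/8)*(z t - μ)^2))
      = μ ^ (-(1/2):ℝ) + (3/8) * ((2/π) * ∫ t in (0:ℝ)..(π/2), (z t - μ)^2) := by
    have h2π : (2/π)*(π/2) = 1 := by
      field_simp
    have hC : C0 - C1*μ = μ ^ (-(1/2):ℝ) := by
      rw [hC0, hC1, mul_assoc, hrpow]; ring
    rw [hsplit, hIz]
    calc (2/π) * ((π/2 * C0 - C1 * (π/2 * μ)) + 3/8 * ∫ t in (0:ℝ)..(π/2), (z t - μ)^2)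
        = ((2/π)*(π/2)) * (C0 - C1*μ)
          + (3/8) * ((2/π) * ∫ t in (0:ℝ)..(π/2), (z t - μ)^2) := by ring
      _ = μ ^ (-(1/2):ℝ) + (3/8) * ((2/π) * ∫ t in (0:ℝ)..(π/2), (z t - μ)^2) := by
          rw [h2π, hC]; ring
  calc μ ^ (-(1/2):ℝ) + (3/8) * ((2/π) * ∫ t in (0:ℝ)..(π/2), (z t - μ)^2)
      = (2/π) * (∫ t in (0:ℝ)..(π/2), (C0 - C1 * z t + (3/8)*(z t - μ)^2)) := key.symm
    _ ≤ (2/π) * ∫ t in (0:ℝ)..(π/2), (z t) ^ (-(1/2):ℝ) :=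
        mul_le_mul_of_nonneg_left hmono hπ'.le
end

section
/- Let V be a real number with 0 < V < 1/4. Then for every δ ∈ [0, 1/2], (1−δ)^{−1/2} + (3/8)·V·δ² ≥ (1 − δ − (V/4)·δ²)^{−1/2}. -/
open Real

theorem stmt18 (V : ℝ) (hV : 0 < V) (hV' : V < 1/4) (δ : ℝ)
    (hδ : δ ∈ Set.Icc (0:ℝ) (1/2)) :
    (1 - δ) ^ (-(1/2) : ℝ) + (3/8) * V * δ^2 ≥
      (1 - δ - (V/4) * δ^2) ^ (-(1/2) : ℝ) := by
  obtain ⟨h0, h1⟩ := hδ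
  have hδ2 : δ^2 ≤ 1/4 := by nlinarith
  have ha : (0:ℝ) < 1 - δ := by linarith
  have hb : (31:ℝ)/64 ≤ 1 - δ - V/4 * δ^2 := by nlinarith [sq_nonneg δ]
  have hb0 : (0:ℝ) < 1 - δ - V/4 * δ^2 := by linarith
  have hba : 1 - δ - V/4 * δ^2 ≤ 1 - δ := by nlinarith [sq_nonneg δ]
  rw [show (1 - δ - V/4 * δ^2 : ℝ) = 1 - δ - V/4 * δ^2 from rfl] at *
  set a := 1 - δ with hadef
  set b := 1 - δ - V/4 * δ^2 with hbdef
  have hrw : ∀ x : ℝ, 0 ≤ x → x ^ (-(1/2) : ℝ) = (Real.sqrt x)⁻¹ := by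
    intro x hx
    rw [Real.rpow_neg hx, Real.sqrt_eq_rpow]
  rw [hrw a ha.le, hrw b hb0.le]
  set sa := Real.sqrt a with hsadef
  set sb := Real.sqrt b with hsbdef
  have hsa2 : sa^2 = a := Real.sq_sqrt ha.le
  have hsb2 : sb^2 = b := Real.sq_sqrt hb0.le
  have hsa0 : 0 < sa := Real.sqrt_pos.mpr ha
  have hsb0 : 0 < sb := Real.sqrt_pos.mpr hb0
  have hsab : sb ≤ sa := Real.sqrt_le_sqrt hba
  have hsb6 : sb^6 ≥ (31/64)^3 := by
    have : sb^6 = b^3 := by rw [← hsb2]; ring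
    rw [this]
    have : (31/64:ℝ)^3 ≤ b^3 := by
      apply pow_le_pow_left₀ (by norm_num) hb
    linarith
  have hsb3 : sb^3 ≥ 1/3 := by nlinarith [pow_pos hsb0 3]
  have hfac : 1 ≤ (3/2) * (sa + sb) * sa * sb := by
    nlinarith [mul_pos hsb0 hsb0, pow_pos hsb0 3]
  have hc : (3/8) * V * δ^2 = (3/2) * (sa^2 - sb^2) := by
    rw [hsa2, hsb2, hadef, hbdef]; ring
  rw [ge_iff_le, ← sub_nonneg]
  have heq : sa⁻¹ + (3/8) * V * δ^2 - sb⁻¹ =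
      ((sa - sb) * ((3/2) * (sa + sb) * sa * sb - 1)) / (sa * sb) := by
    rw [hc]
    field_simp
    ring
  rw [heq]
  apply div_nonneg
  · exact mul_nonneg (by linarith) (by linarith)
  · positivity
end
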